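/- Let N be a rooted phylogenetic network on a finite set X and let Ñ be its normalisation. Then every vertex of Ñ is visible in Ñ; that is, Ñ is a tree-child network. -/

import Mathlib

/-!
Formalisation framework for rooted phylogenetic networks.

A network is represented as a directed graph on an ambient vertex type `V`:
a vertex set `verts`, a root vertex `root`, and an arc relation `arc`.
-/

structure Net (V : Type*) where
  verts : Set V
  root : V
  arc : V → V → Prop

namespace Net

variable {V : Type*} {W : Type*}

/-- `N.reach u v` means there is a (possibly empty) directed path from `u` to `v`. -/
def reach (N : Net V) : V → V → Prop := Relation.ReflTransGen N.arc

/-- The in-degree of a vertex. -/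
noncomputable def inDeg (N : Net V) (v : V) : ℕ := {u | N.arc u v}.ncard

/-- The out-degree of a vertex. -/
noncomputable def outDeg (N : Net V) (v : V) : ℕ := {w | N.arc v w}.ncard

/-- The leaves of `N`: the vertices of out-degree 0. -/
def leaves (N : Net V) : Set V := {v ∈ N.verts | N.outDeg v = 0}

/-- `N.IsPathFrom u v l` : the list `l` is a directed path in `N` from `u` to `v`
(consecutive entries joined by arcs; a one-element list is the empty path). -/
def IsPathFrom (N : Net V) (u v : V) (l : List V) : Prop :=
  l.Chain' N.arc ∧ l.head? = some u ∧ l.getLast? = some v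

/-- A vertex is visible if some leaf is such that every directed path from the
root to that leaf passes through the vertex. -/
def Visible (N : Net V) (x : V) : Prop :=
  x ∈ N.verts ∧ ∃ y ∈ N.leaves, ∀ l : List V, N.IsPathFrom N.root y l → x ∈ l

/-- A subdividing vertex is one of in-degree 1 and out-degree 1. -/
def Subdividing (N : Net V) (v : V) : Prop := N.inDeg v = 1 ∧ N.outDeg v = 1

/-- The digraph `Cov(N)` on the visible vertices of `N`: an arc `(u,v)` whenever
`u ≠ v`, `u →_N v`, and no visible vertex lies strictly between `u` and `v`. -/
def cov (N : Net V) : Net V where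
  verts := {v | N.Visible v}
  root := N.root
  arc u v := N.Visible u ∧ N.Visible v ∧ u ≠ v ∧ N.reach u v ∧
    ¬ ∃ w, N.Visible w ∧ w ≠ u ∧ w ≠ v ∧ N.reach u w ∧ N.reach w v

/-- The normalisation `Ñ` of `N`: obtained from `Cov(N)` by suppressing every
subdividing vertex.  Its vertices are the visible vertices of `N` that are not
subdividing in `Cov(N)`, with an arc `(u,v)` whenever `Cov(N)` has a directed path
from `u` to `v` (of length at least one) all of whose interior vertices are
subdividing in `Cov(N)`. -/
def normalise (N : Net V) : Net V where
  verts := {v | N.Visible v ∧ ¬ N.cov.Subdividing v}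
  root := N.root
  arc u v := (N.Visible u ∧ ¬ N.cov.Subdividing u) ∧ (N.Visible v ∧ ¬ N.cov.Subdividing v) ∧
    ∃ l : List V, N.cov.IsPathFrom u v l ∧ 2 ≤ l.length ∧
      ∀ w ∈ l.tail.dropLast, N.cov.Subdividing w

/-- `N` is a rooted phylogenetic network on the finite nonempty leaf set `X`. -/
structure IsPhylo (N : Net V) (X : Set V) : Prop where
  finite : N.verts.Finite
  nonempty : X.Nonempty
  arc_mem : ∀ ⦃u v : V⦄, N.arc u v → u ∈ N.verts ∧ v ∈ N.verts
  acyclic : ∀ ⦃u v : V⦄, N.arc u v → ¬ N.reach v u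
  root_mem : N.root ∈ N.verts
  root_inDeg : N.inDeg N.root = 0
  root_unique : ∀ v ∈ N.verts, N.inDeg v = 0 → v = N.root
  leaves_eq : N.leaves = X
  leaf_inDeg : ∀ x ∈ X, N.inDeg x = 1
  interior_deg : ∀ v ∈ N.verts, v ≠ N.root → v ∉ X →
    (N.inDeg v = 1 ∧ 2 ≤ N.outDeg v) ∨ (N.outDeg v = 1 ∧ 2 ≤ N.inDeg v)

/-- `N` has no shortcuts: no arc `(u,v)` such that there is also a directed path
from `u` to `v` of length at least 2 (i.e. a path-list with at least 3 entries). -/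
def NoShortcuts (N : Net V) : Prop :=
  ∀ u v : V, N.arc u v → ¬ ∃ l : List V, N.IsPathFrom u v l ∧ 3 ≤ l.length

/-- Tree-child: every vertex is visible. -/
def TreeChild (N : Net V) : Prop := ∀ v ∈ N.verts, N.Visible v

/-- Normal: tree-child with no shortcuts. -/
def Normal (N : Net V) : Prop := N.TreeChild ∧ N.NoShortcuts

/-- A tree: every vertex has in-degree at most 1. -/
def IsTree (N : Net V) : Prop := ∀ v ∈ N.verts, N.inDeg v ≤ 1

/-- The cluster of `v`: the set of leaves reachable from `v`. -/
def cluster (N : Net V) (v : V) : Set V := {x ∈ N.leaves | N.reach v x}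

/-- The identifying set of `v`: the set of leaves `x` such that every directed
path from the root to `x` passes through `v`. -/
def ident (N : Net V) (v : V) : Set V :=
  {x ∈ N.leaves | ∀ l : List V, N.IsPathFrom N.root x l → v ∈ l}

/-- A digraph isomorphism between two networks, given by the map `f`. -/
def NetEquiv (M : Net V) (M' : Net W) (f : V → W) : Prop :=
  Set.BijOn f M.verts M'.verts ∧
    ∀ u ∈ M.verts, ∀ v ∈ M.verts, (M.arc u v ↔ M'.arc (f u) (f v))

/-- Two networks over the same ambient type are equivalent relative to a leaf set
`X` if there is a digraph isomorphism between them fixing each element of `X`. -/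
def EquivOn (M M' : Net V) (X : Set V) : Prop :=
  ∃ f : V → V, NetEquiv M M' f ∧ ∀ x ∈ X, f x = x

/-- `N₁ ⊕ N₂` : disjoint copies of `N₁` and `N₂` under a new root (`none`). -/
def oplus {V₁ V₂ : Type*} (N₁ : Net V₁) (N₂ : Net V₂) : Net (Option (V₁ ⊕ V₂)) where
  verts := insert none
    ((fun v => some (Sum.inl v)) '' N₁.verts ∪ (fun v => some (Sum.inr v)) '' N₂.verts)
  root := none
  arc a b :=
    match a, b with
    | none, some (Sum.inl w) => w = N₁.root
    | none, some (Sum.inr w) => w = N₂.root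
    | some (Sum.inl u), some (Sum.inl w) => N₁.arc u w
    | some (Sum.inr u), some (Sum.inr w) => N₂.arc u w
    | _, _ => False

/-- `N₁ ⊗ N₂` : identify each leaf `x` of `N₁` with the root of its own copy of `N₂`;
the copy of a non-leaf vertex `u` of `N₁` is `Sum.inl u`, and the vertex `w` of the
copy of `N₂` attached at leaf `x` of `N₁` is `Sum.inr (x, w)`. -/
def otimes {V₁ V₂ : Type*} (N₁ : Net V₁) (N₂ : Net V₂) : Net (V₁ ⊕ V₁ × V₂) where
  verts := Sum.inl '' (N₁.verts \ N₁.leaves) ∪ Sum.inr '' (N₁.leaves ×ˢ N₂.verts)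
  root := Sum.inl N₁.root
  arc a b :=
    match a, b with
    | Sum.inl u, Sum.inl w => N₁.arc u w ∧ w ∉ N₁.leaves
    | Sum.inl u, Sum.inr (x, w) => x ∈ N₁.leaves ∧ N₁.arc u x ∧ w = N₂.root
    | Sum.inr (x, w), Sum.inr (x', w') => x = x' ∧ x ∈ N₁.leaves ∧ N₂.arc w w'
    | _, _ => False

end Net

/-- A hierarchy: a collection of sets any two of which are disjoint or nested. -/
def IsHierarchy {V : Type*} (C : Set (Set V)) : Prop :=
  ∀ A ∈ C, ∀ B ∈ C, A ∩ B = ∅ ∨ A ⊆ B ∨ B ⊆ A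

/-!
A vertex `v` of `Ñ` is visible in `N`, through some leaf `y`, and `y` is still a leaf of `Ñ`.
A path of `Ñ` avoiding `v` expands to a path of `Cov(N)` avoiding `v`, because `v` is not
subdividing in `Cov(N)` and so is never suppressed, and that in turn expands to a path of `N`
avoiding `v`, because the visible vertex `v` never lies strictly between the ends of an arc of
`Cov(N)`. So every root-`y` path of `Ñ` passes through `v`, as every such path of `N` does.
-/

theorem List.mem_tail_dropLast_of_mem {α : Type*} {l : List α} {a b x : α}
    (hhead : l.head? = some a) (hlast : l.getLast? = some b) (hx : x ∈ l) (hxa : x ≠ a)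
    (hxb : x ≠ b) : x ∈ l.tail.dropLast := by
  obtain ⟨t, rfl⟩ : ∃ t, l = a :: t := by
    cases l with
    | nil => simp at hhead
    | cons c t => exact ⟨t, by simpa using hhead⟩
  have hxt : x ∈ t := by simpa [hxa] using hx
  have ht : t ≠ [] := List.ne_nil_of_mem hxt
  rw [List.getLast?_cons, List.getLast?_eq_some_getLast ht, Option.getD_some,
    Option.some_inj] at hlast
  rw [← List.dropLast_append_getLast ht, hlast] at hxt
  simpa [hxb] using hxt

namespace Net

variable {V : Type*} (N : Net V)

def deleteVert (v : V) : Net V where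
  verts := N.verts \ {v}
  root := N.root
  arc a b := N.arc a b ∧ a ≠ v ∧ b ≠ v

variable {N}

theorem IsPathFrom.reach_deleteVert {u w v : V} {l : List V} (hl : N.IsPathFrom u w l)
    (hv : v ∉ l) : (N.deleteVert v).reach u w := by
  obtain ⟨hchain, hhead, hlast⟩ := hl
  have hne : l ≠ [] := by rintro rfl; simp at hhead
  have hchain' : l.IsChain (N.deleteVert v).arc := hchain.imp_of_mem_imp
    fun a b ha hb hab => ⟨hab, fun h => hv (h ▸ ha), fun h => hv (h ▸ hb)⟩
  have := List.relationReflTransGen_of_exists_isChain l hchain' hne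
  rwa [(List.head_eq_iff_head?_eq_some hne).mpr hhead, List.getLast_of_mem_getLast? hlast] at this

theorem exists_isPathFrom_of_reach_deleteVert {u w v : V} (h : (N.deleteVert v).reach u w)
    (hu : u ≠ v) : ∃ l, N.IsPathFrom u w l ∧ v ∉ l := by
  obtain ⟨l, hne, hchain, hhead, hlast⟩ := List.exists_isChain_ne_nil_of_relationReflTransGen h
  refine ⟨l, ⟨hchain.imp fun _ _ hab => hab.1, ?_, ?_⟩, fun hv => ?_⟩
  · rw [List.head?_eq_some_head hne, hhead]
  · rw [List.getLast?_eq_some_getLast hne, hlast]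
  · exact hchain.induction (· ≠ v) l (fun _ _ hab _ => hab.2.2) (fun _ => hhead ▸ hu) v hv rfl

theorem reach_deleteVert_of_forall_ne {a b v : V} (h : N.reach a b)
    (hne : ∀ x, N.reach a x → N.reach x b → x ≠ v) : (N.deleteVert v).reach a b := by
  induction h using Relation.ReflTransGen.head_induction_on with
  | refl => exact .refl
  | @head a c hac hcb ih =>
    have hac' : N.reach a c := .single hac
    exact .head ⟨hac, hne a .refl (hac'.trans hcb), hne c hac' hcb⟩
      (ih fun x hcx hxb => hne x (hac'.trans hcx) hxb)

theorem reach_deleteVert_of_cov {a b v : V} (hv : N.Visible v)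
    (h : (N.cov.deleteVert v).reach a b) : (N.deleteVert v).reach a b := by
  refine Relation.reflTransGen_closed (fun c d hcd => ?_) _ _ h
  obtain ⟨⟨-, -, -, hreach, hnone⟩, hcv, hdv⟩ := hcd
  refine reach_deleteVert_of_forall_ne hreach ?_
  rintro x hcx hxd rfl
  exact hnone ⟨x, hv, hcv.symm, hdv.symm, hcx, hxd⟩

theorem cov_reach_deleteVert_of_normalise {a b v : V} (hv : v ∈ N.normalise.verts)
    (h : (N.normalise.deleteVert v).reach a b) : (N.cov.deleteVert v).reach a b := by
  refine Relation.reflTransGen_closed (fun c d hcd => ?_) _ _ h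
  obtain ⟨⟨-, -, l, hl, -, hsub⟩, hcv, hdv⟩ := hcd
  refine hl.reach_deleteVert fun hvl => hv.2 (hsub v ?_)
  exact List.mem_tail_dropLast_of_mem hl.2.1 hl.2.2 hvl hcv.symm hdv.symm

theorem visible_of_mem_leaves {y : V} (hy : y ∈ N.leaves) : N.Visible y :=
  ⟨hy.1, y, hy, fun _ hl => List.mem_of_getLast? hl.2.2⟩

theorem visible_iff_ident_nonempty {v : V} : N.Visible v ↔ v ∈ N.verts ∧ (N.ident v).Nonempty :=
  Iff.rfl

theorem outDeg_eq_zero_of_forall_not_arc {y : V} (h : ∀ w, ¬ N.arc y w) : N.outDeg y = 0 := by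
  simp [outDeg, h]

theorem not_cov_arc_of_forall_not_arc {y w : V} (h : ∀ w, ¬ N.arc y w) : ¬ N.cov.arc y w := by
  rintro ⟨-, -, hyw, hreach, -⟩
  rcases hreach.cases_head with rfl | ⟨c, hyc, -⟩
  exacts [hyw rfl, h c hyc]

theorem not_normalise_arc_of_forall_not_cov_arc {y w : V} (h : ∀ w, ¬ N.cov.arc y w) :
    ¬ N.normalise.arc y w := by
  rintro ⟨-, -, l, ⟨hchain, hhead, -⟩, hlen, -⟩
  match l, hhead, hlen with
  | a :: c :: _, hhead, _ =>
    obtain rfl : a = y := by simpa using hhead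
    exact h c (List.isChain_cons_cons.mp hchain).1

theorem IsPhylo.not_arc_of_mem_leaves {X : Set V} (hN : N.IsPhylo X) {y w : V}
    (hy : y ∈ N.leaves) : ¬ N.arc y w := by
  have hfin : {w | N.arc y w}.Finite := hN.finite.subset fun _ hw => (hN.arc_mem hw).2
  have hempty : {w | N.arc y w} = ∅ := (Set.ncard_eq_zero hfin).mp hy.2
  exact fun hw => hempty.subset hw

theorem IsPhylo.leaves_subset_normalise_leaves {X : Set V} (hN : N.IsPhylo X) :
    N.leaves ⊆ N.normalise.leaves := by
  intro y hy
  have hcov : ∀ w, ¬ N.cov.arc y w :=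
    fun _ => not_cov_arc_of_forall_not_arc fun _ => hN.not_arc_of_mem_leaves hy
  have hnotsub : ¬ N.cov.Subdividing y := by
    simp [Subdividing, outDeg_eq_zero_of_forall_not_arc hcov]
  exact ⟨⟨visible_of_mem_leaves hy, hnotsub⟩,
    outDeg_eq_zero_of_forall_not_arc fun _ => not_normalise_arc_of_forall_not_cov_arc hcov⟩

theorem IsPhylo.ident_subset_normalise_ident {X : Set V} (hN : N.IsPhylo X) {v : V}
    (hv : v ∈ N.normalise.verts) : N.ident v ⊆ N.normalise.ident v := by
  rintro y ⟨hy, hthrough⟩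
  refine ⟨hN.leaves_subset_normalise_leaves hy, fun l hl => ?_⟩
  by_contra hvl
  have hroot : N.root ≠ v := fun h => hvl (h ▸ List.mem_of_mem_head? hl.2.1)
  have hreach : (N.deleteVert v).reach N.root y :=
    reach_deleteVert_of_cov hv.1 (cov_reach_deleteVert_of_normalise hv (hl.reach_deleteVert hvl))
  obtain ⟨m, hm, hvm⟩ := exists_isPathFrom_of_reach_deleteVert hreach hroot
  exact hvm (hthrough m hm)

end Net

theorem stmt5 {V : Type*} (N : Net V) (X : Set V) (hN : N.IsPhylo X) :
    N.normalise.TreeChild := by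
  intro v hv
  obtain ⟨-, hident⟩ := Net.visible_iff_ident_nonempty.mp hv.1
  exact Net.visible_iff_ident_nonempty.mpr ⟨hv, hident.mono (hN.ident_subset_normalise_ident hv)⟩
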